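/- arXiv:1612.06841 — 2 statements merged into one kernel-verified Lean document; each statement's English description precedes it below -/
import Mathlib

section
/- Let F be an infinite field, n = m + k, and for j = 1, ..., k let λ_j ∈ F and (a_{1,j}, ..., a_{m,j}) ∈ N_0^m. Let f_j* = t_{m+j} - λ_j·t_1^{a_{1,j}}···t_m^{a_{m,j}} and let V ⊆ F^n be the common zero set of {f_1*, ..., f_k*}. Then the vanishing ideal I(V) equals the ideal generated by f_1*, ..., f_k*. -/
open MvPolynomial

theorem stmt11 (F : Type*) [Field F] [Infinite F] (m k : ℕ) (lam : Fin k → F)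
    (a : Fin m → Fin k → ℕ)
    (f : Fin k → MvPolynomial (Fin (m + k)) F)
    (hf : ∀ j, f j = X (Fin.natAdd m j) -
      C (lam j) * ∏ ℓ : Fin m, X (Fin.castAdd k ℓ) ^ a ℓ j)
    (V : Set (Fin (m + k) → F))
    (hV : V = {y | ∀ j : Fin k, eval y (f j) = 0}) :
    {g : MvPolynomial (Fin (m + k)) F | ∀ y ∈ V, eval y g = 0} =
      ↑(Ideal.span (Set.range f)) := by
  subst hV
  set I : Ideal (MvPolynomial (Fin (m + k)) F) := Ideal.span (Set.range f) with hI
  set σ : Fin (m + k) → MvPolynomial (Fin (m + k)) F :=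
    Fin.addCases (fun i => X (Fin.castAdd k i))
      (fun j => C (lam j) * ∏ ℓ : Fin m, X (Fin.castAdd k ℓ) ^ a ℓ j) with hσ
  have hmk : ∀ p : MvPolynomial (Fin (m + k)) F,
      p - aeval σ p ∈ I := by
    intro p
    rw [← Ideal.Quotient.eq]
    have : (Ideal.Quotient.mkₐ F I).comp (aeval σ) = Ideal.Quotient.mkₐ F I := by
      apply MvPolynomial.algHom_ext
      intro i
      refine Fin.addCases (fun i => ?_) (fun j => ?_) i
      · simp [hσ]
      · simp only [AlgHom.comp_apply, aeval_X, hσ, Fin.addCases_right,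
          Ideal.Quotient.mkₐ_eq_mk]
        rw [Ideal.Quotient.eq]
        have : f j ∈ I := Ideal.subset_span ⟨j, rfl⟩
        rw [hf j] at this
        simpa using (I.neg_mem this)
    have := congrArg (fun φ => φ p) this
    simpa using this.symm
  ext g
  simp only [Set.mem_setOf_eq, SetLike.mem_coe]
  constructor
  · intro hg
    have hfix : aeval σ g = 0 := by
      apply MvPolynomial.funext
      intro z
      have step : eval z (aeval σ g) = eval (fun i => eval z (σ i)) g := by
        simpa using eval₂Hom_bind₁ (RingHom.id F) z σ g
      rw [step, map_zero]
      apply hg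
      intro j
      rw [hf j]
      simp [hσ]
    have := hmk g
    rwa [hfix, sub_zero] at this
  · intro hg y hy
    have hle : I ≤ RingHom.ker (eval y) := by
      rw [hI, Ideal.span_le]
      rintro _ ⟨j, rfl⟩
      exact hy j
    exact hle hg
end

section
/- Let F be an infinite field and V ⊆ F^n the common zero set of f_j* = t_{m+j} - λ_j·t_1^{a_{1,j}}···t_m^{a_{m,j}} for j = 1, ..., k (with n = m + k). Then the ideal generated by f_1*, ..., f_k* in F[t_1, ..., t_n] is a prime ideal. -/
open MvPolynomial

theorem stmt15 (F : Type*) [Field F] [Infinite F] (m k : ℕ) (lam : Fin k → F)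
    (a : Fin m → Fin k → ℕ)
    (f : Fin k → MvPolynomial (Fin (m + k)) F)
    (hf : ∀ j, f j = X (Fin.natAdd m j) -
      C (lam j) * ∏ ℓ : Fin m, X (Fin.castAdd k ℓ) ^ a ℓ j) :
    (Ideal.span (Set.range f)).IsPrime := by
  set g : Fin (m + k) → MvPolynomial (Fin m) F :=
    Fin.addCases (fun ℓ => X ℓ) (fun j => C (lam j) * ∏ ℓ : Fin m, X ℓ ^ a ℓ j) with hg
  set φ : MvPolynomial (Fin (m + k)) F →+* MvPolynomial (Fin m) F := (aeval g).toRingHom with hφ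
  set ψ : MvPolynomial (Fin m) F →+* MvPolynomial (Fin (m + k)) F :=
    (rename (Fin.castAdd k)).toRingHom with hψ
  have hXleft : ∀ ℓ : Fin m, ψ (φ (X (Fin.castAdd k ℓ))) = X (Fin.castAdd k ℓ) := by
    intro ℓ
    simp [hφ, hψ, hg, Fin.addCases_left]
  have hXright : ∀ j : Fin k,
      ψ (φ (X (Fin.natAdd m j))) = C (lam j) * ∏ ℓ : Fin m, X (Fin.castAdd k ℓ) ^ a ℓ j := by
    intro j
    simp [hφ, hψ, hg, Fin.addCases_right, map_prod]
  have key : ∀ p, p - ψ (φ p) ∈ Ideal.span (Set.range f) := by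
    intro p
    induction p using MvPolynomial.induction_on with
    | C c => simp [hφ, hψ]
    | add p q hp hq =>
      have := Ideal.add_mem _ hp hq
      rw [map_add, map_add]
      rw [show p + q - (ψ (φ p) + ψ (φ q)) = (p - ψ (φ p)) + (q - ψ (φ q)) by ring]
      exact this
    | mul_X p i hp =>
      have hXi : X i - ψ (φ (X i)) ∈ Ideal.span (Set.range f) := by
        induction i using Fin.addCases with
        | left ℓ => rw [hXleft]; simp
        | right j =>
          rw [hXright, ← hf j]
          exact Ideal.subset_span ⟨j, rfl⟩
      have hsplit : p * X i - ψ (φ (p * X i)) =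
          (p - ψ (φ p)) * X i + ψ (φ p) * (X i - ψ (φ (X i))) := by
        rw [map_mul, map_mul]; ring
      rw [hsplit]
      exact Ideal.add_mem _ (Ideal.mul_mem_right _ _ hp) (Ideal.mul_mem_left _ _ hXi)
  have hker : Ideal.span (Set.range f) = RingHom.ker φ := by
    apply le_antisymm
    · rw [Ideal.span_le]
      rintro _ ⟨j, rfl⟩
      simp only [SetLike.mem_coe, RingHom.mem_ker]
      rw [hf j]
      simp [hφ, hg, Fin.addCases_left, Fin.addCases_right, map_prod]
    · intro p hp
      rw [RingHom.mem_ker] at hp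
      have := key p
      rw [hp, map_zero, sub_zero] at this
      exact this
  rw [hker]
  exact RingHom.ker_isPrime φ
end
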